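/- arXiv:2202.09296 — 2 statements merged into one kernel-verified Lean document; each statement's English description precedes it below -/
import Mathlib

section
/- Let m ≥ 3 and n ≥ 1 be integers. Let c be a finite sequence of positive integers with R'(c) ⊆ T(n) and T(n) \ R'(c) nonempty, and let g be the least element of T(n) \ R'(c). Let d be a finite sequence of positive integers with R'(d) = T(g+1). Then the concatenated sequence c followed by d satisfies R'(c ⌢ d) = T(n) \ {g}. -/
/-! Because `0 ∈ GP_m`, the values of the form `c ⌢ d`, zero included, are exactly the sums
`a + b` of a value `a ∈ R'(c) ∪ {0}` and a value `b ∈ R'(d) ∪ {0} = {0} ∪ T(g+1)`.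
Such a sum is never `g`: `a` alone misses `g` by minimality of `g`, `b` alone exceeds it,
and `a + b` with both nonzero exceeds `g + n`. Conversely every `x ≥ n` other than `g` is
either in `R'(c)` or, by minimality of `g`, at least `g + 1`. -/

/-- `s` is a generalized `m`-gonal number, i.e. `s = ((m-2)u^2 - (m-4)u)/2` for some `u ∈ ℤ`. -/
def IsGP (m s : ℤ) : Prop := ∃ u : ℤ, 2 * s = (m - 2) * u ^ 2 - (m - 4) * u

/-- `R'(a)`: the set of nonzero integers represented by the `m`-gonal form with
coefficient sequence `a`, i.e. expressible as `a₁s₁ + ⋯ + aₖsₖ` with each `sᵢ ∈ GP_m`. -/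
def Rset (m : ℤ) (a : List ℤ) : Set ℤ :=
  {x | x ≠ 0 ∧ ∃ s : List ℤ, s.length = a.length ∧ (∀ y ∈ s, IsGP m y) ∧
      x = (List.zipWith (· * ·) a s).sum}

theorem isGP_zero (m : ℤ) : IsGP m 0 := ⟨0, by ring⟩

def Rset₀ (m : ℤ) (a : List ℤ) : Set ℤ :=
  {x | ∃ s : List ℤ, s.length = a.length ∧ (∀ y ∈ s, IsGP m y) ∧
      x = (List.zipWith (· * ·) a s).sum}

theorem sum_zipWith_mul_replicate_zero (l : List ℤ) :
    (List.zipWith (· * ·) l (List.replicate l.length 0)).sum = 0 := by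
  induction l with
  | nil => rfl
  | cons a l ih => simp [List.replicate_succ, ih]

theorem zero_mem_Rset₀ (m : ℤ) (a : List ℤ) : 0 ∈ Rset₀ m a :=
  ⟨List.replicate a.length 0, List.length_replicate,
    fun _ hy => List.eq_of_mem_replicate hy ▸ isGP_zero m,
    (sum_zipWith_mul_replicate_zero a).symm⟩

theorem Rset₀_eq_insert_Rset (m : ℤ) (a : List ℤ) : Rset₀ m a = insert 0 (Rset m a) := by
  ext x
  by_cases hx : x = 0
  · simpa [hx] using zero_mem_Rset₀ m a
  · simp [Rset₀, Rset, hx]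

theorem Rset_eq_Rset₀_diff_zero (m : ℤ) (a : List ℤ) : Rset m a = Rset₀ m a \ {0} := by
  ext x
  simp [Rset, Rset₀, and_comm]

open scoped Pointwise in
theorem Rset₀_append (m : ℤ) (c d : List ℤ) : Rset₀ m (c ++ d) = Rset₀ m c + Rset₀ m d := by
  ext x
  constructor
  · rintro ⟨s, hlen, hGP, rfl⟩
    rw [List.length_append] at hlen
    have hs : s = s.take c.length ++ s.drop c.length := (List.take_append_drop _ _).symm
    have hGP' : ∀ y ∈ s.take c.length ++ s.drop c.length, IsGP m y := hs ▸ hGP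
    refine ⟨_, ⟨s.take c.length, by simp; omega, fun y hy => hGP' y (List.mem_append_left _ hy), rfl⟩,
      _, ⟨s.drop c.length, by simp; omega, fun y hy => hGP' y (List.mem_append_right _ hy), rfl⟩, ?_⟩
    beta_reduce
    rw [← List.sum_append, ← List.zipWith_append (by simp; omega), ← hs]
  · rintro ⟨_, ⟨s, hs, hGPs, rfl⟩, _, ⟨t, ht, hGPt, rfl⟩, rfl⟩
    refine ⟨s ++ t, by simp [hs, ht], ?_, by rw [List.zipWith_append hs.symm, List.sum_append]⟩
    intro y hy
    rcases List.mem_append.1 hy with hy | hy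
    exacts [hGPs y hy, hGPt y hy]

theorem concat_represents_general (m n : ℤ) (hn : 1 ≤ n)
    (c d : List ℤ)
    (hsub : Rset m c ⊆ Set.Ici n) (g : ℤ)
    (hg : IsLeast (Set.Ici n \ Rset m c) g)
    (hdg : Rset m d = Set.Ici (g + 1)) :
    Rset m (c ++ d) = Set.Ici n \ {g} := by
  have hgn : n ≤ g := hg.1.1
  ext x
  rw [Rset_eq_Rset₀_diff_zero, Rset₀_append, Rset₀_eq_insert_Rset, Rset₀_eq_insert_Rset, hdg]
  simp only [Set.mem_sdiff, Set.mem_add, Set.mem_insert_iff, Set.mem_Ici, Set.mem_singleton_iff]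
  constructor
  · rintro ⟨⟨a, ha, b, hb, rfl⟩, hx0⟩
    rcases ha with rfl | ha <;> rcases hb with rfl | hb
    · exact absurd rfl hx0
    · omega
    · rw [add_zero]
      exact ⟨hsub ha, fun h => hg.1.2 (h ▸ ha)⟩
    · have han : n ≤ a := hsub ha
      omega
  · rintro ⟨hxn, hxg⟩
    refine ⟨?_, by omega⟩
    by_cases hxc : x ∈ Rset m c
    · exact ⟨x, Or.inr hxc, 0, Or.inl rfl, add_zero x⟩
    · have hgx : g ≤ x := hg.2 ⟨hxn, hxc⟩
      exact ⟨0, Or.inl rfl, x, Or.inr (by omega), zero_add x⟩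

/-- If `R'(c) ⊆ T(n)`, `g` is the least element of the nonempty set `T(n) \ R'(c)`,
and `R'(d) = T(g+1)`, then the concatenation satisfies `R'(c ⌢ d) = T(n) \ {g}`. -/
theorem concat_represents (m n : ℤ) (hm : 3 ≤ m) (hn : 1 ≤ n)
    (c d : List ℤ) (hc : ∀ x ∈ c, 0 < x) (hd : ∀ x ∈ d, 0 < x)
    (hsub : Rset m c ⊆ Set.Ici n) (g : ℤ)
    (hg : IsLeast (Set.Ici n \ Rset m c) g)
    (hdg : Rset m d = Set.Ici (g + 1)) :
    Rset m (c ++ d) = Set.Ici n \ {g} :=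
  concat_represents_general m n hn c d hsub g hg hdg
end

section
/- Let m ≥ 3 and n ≥ 1 be integers. Let a = (a_1, …, a_k) be a finite sequence of integers, each at least n, and let g ∈ T(n) be an integer with g ∉ R'(a). Let b ≥ n be an integer such that g ∈ R'(a ⌢ (b)), where a ⌢ (b) is the sequence a with the additional coefficient b appended. Then either n ≤ b ≤ g − n or b = g. -/
/-- `2 P_m(u) = (m - 3) u (u - 1) + u (u + 1)`, a sum of nonnegative terms when `m ≥ 3`. -/
theorem IsGP.nonneg {m s : ℤ} (hm : 3 ≤ m) (h : IsGP m s) : 0 ≤ s := by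
  obtain ⟨u, hu⟩ := h
  have hconsec : ∀ v : ℤ, 0 ≤ v * (v + 1) := fun v => by
    rcases le_or_gt 0 v with hv | hv
    · positivity
    · nlinarith
  have := hconsec (u - 1)
  have := hconsec u
  nlinarith

theorem sum_zipWith_mul_eq_zero_or_le {n : ℤ} (hn : 0 ≤ n) :
    ∀ {a s : List ℤ}, (∀ x ∈ a, n ≤ x) → (∀ y ∈ s, 0 ≤ y) →
      (List.zipWith (· * ·) a s).sum = 0 ∨ n ≤ (List.zipWith (· * ·) a s).sum
  | [], _, _, _ => by simp
  | _ :: _, [], _, _ => by simp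
  | x :: a, y :: s, ha, hs => by
    have hrest := sum_zipWith_mul_eq_zero_or_le hn (a := a) (s := s)
      (fun z hz => ha z (List.mem_cons_of_mem _ hz)) (fun z hz => hs z (List.mem_cons_of_mem _ hz))
    have hx : n ≤ x := ha x List.mem_cons_self
    have hy : 0 ≤ y := hs y List.mem_cons_self
    have hhead : x * y = 0 ∨ n ≤ x * y := by
      rcases hy.eq_or_lt with rfl | hy
      · simp
      · right; nlinarith
    rw [List.zipWith_cons_cons, List.sum_cons]
    omega

theorem exists_of_mem_Rset_append_singleton {m g b : ℤ} {a : List ℤ}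
    (h : g ∈ Rset m (a ++ [b])) :
    g ≠ 0 ∧ ∃ s : List ℤ, s.length = a.length ∧ (∀ y ∈ s, IsGP m y) ∧
      ∃ t, IsGP m t ∧ g = (List.zipWith (· * ·) a s).sum + b * t := by
  obtain ⟨hg, s, hlen, hs, rfl⟩ := h
  rw [List.length_append, List.length_singleton] at hlen
  obtain ⟨t, ht⟩ : ∃ t, s.drop a.length = [t] :=
    List.length_eq_one_iff.mp (by rw [List.length_drop]; omega)
  have hsplit : s = s.take a.length ++ [t] := by rw [← ht, List.take_append_drop]
  refine ⟨hg, s.take a.length, by rw [List.length_take]; omega,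
    fun y hy => hs y (List.mem_of_mem_take hy), t, hs t (by rw [hsplit]; simp), ?_⟩
  conv_lhs => rw [hsplit]
  rw [List.zipWith_append (by rw [List.length_take]; omega)]
  simp

theorem escalator_range_general (m n : ℤ) (hm : 3 ≤ m) (hn : 1 ≤ n)
    (a : List ℤ) (ha : ∀ x ∈ a, n ≤ x)
    (g : ℤ) (hgnot : g ∉ Rset m a)
    (b : ℤ) (hb : n ≤ b) (hrep : g ∈ Rset m (a ++ [b])) :
    (n ≤ b ∧ b ≤ g - n) ∨ b = g := by
  obtain ⟨hg, s, hlen, hs, t, ht, rfl⟩ := exists_of_mem_Rset_append_singleton hrep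
  have ht_pos : 0 < t := by
    refine (ht.nonneg hm).lt_of_ne fun ht0 => hgnot ⟨hg, s, hlen, hs, ?_⟩
    rw [← ht0, mul_zero, add_zero]
  rcases sum_zipWith_mul_eq_zero_or_le (by omega) ha (fun y hy => (hs y hy).nonneg hm) with hA | hA
  · rw [hA, zero_add]
    rcases (show 1 ≤ t from ht_pos).eq_or_lt with rfl | ht2
    · exact Or.inr (mul_one b).symm
    · exact Or.inl ⟨hb, by nlinarith⟩
  · exact Or.inl ⟨hb, by nlinarith⟩

/-- If all coefficients of `a` are `≥ n`, `g ∈ T(n)` is not represented by `a`, and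
appending a coefficient `b ≥ n` makes `g` represented, then `n ≤ b ≤ g - n` or `b = g`. -/
theorem escalator_range (m n : ℤ) (hm : 3 ≤ m) (hn : 1 ≤ n)
    (a : List ℤ) (ha : ∀ x ∈ a, n ≤ x)
    (g : ℤ) (hgT : n ≤ g) (hgnot : g ∉ Rset m a)
    (b : ℤ) (hb : n ≤ b) (hrep : g ∈ Rset m (a ++ [b])) :
    (n ≤ b ∧ b ≤ g - n) ∨ b = g :=
  escalator_range_general m n hm hn a ha g hgnot b hb hrep
end
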